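/- For every abelian map ψ on a group G and every n ≥ 0, the pair (G, ∘_n) is a group: ∘_n is associative, the identity element of G is a two-sided identity for ∘_n, and the two-sided ∘_n-inverse of g ∈ G is ψ_n(g)·g⁻¹·ψ_n(g⁻¹). -/

import Mathlib

/-- `aDelta ψ g = g · ψ(g⁻¹)`, the map `δ = 1 - ψ`. -/
def aDelta {G : Type*} [Group G] (ψ : G → G) (g : G) : G := g * ψ g⁻¹

/-- `aPsi ψ n g = (δⁿ(g))⁻¹ · g`, the map `ψ_n = -(1-ψ)ⁿ + 1` (so `ψ_0 = 0`, `ψ_1 = ψ`). -/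
def aPsi {G : Type*} [Group G] (ψ : G → G) (n : ℕ) (g : G) : G :=
  ((aDelta ψ)^[n] g)⁻¹ * g

/-- `g ∘_n h = g · ψ_n(g⁻¹) · h · ψ_n(g)`. -/
def aCirc {G : Type*} [Group G] (ψ : G → G) (n : ℕ) (g h : G) : G :=
  g * aPsi ψ n g⁻¹ * h * aPsi ψ n g

/-!
Each `ψ_n` is again an abelian map: by the recursion `ψ_{n+1}(g) = ψ(g) · ψ(ψ_n(g))⁻¹ · ψ_n(g)`
all its values lie in the commutative subgroup `ψ(G)`, and the recursion preserves being a
homomorphism since all the factors commute. It therefore suffices to treat `∘_1` for an arbitrary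
abelian map `φ`. There the key identity is `φ(g ∘ h) = φ(g) · φ(h)`, after which associativity
and the inverse laws reduce to moving commuting `φ`-values past each other.
-/

/-- The paper's `∘_1`, with `φ` in place of `ψ`. -/
def abelianCirc {G : Type*} [Group G] (φ : G →* G) (g h : G) : G :=
  g * φ g⁻¹ * h * φ g

namespace abelianCirc

variable {G : Type*} [Group G] (φ : G →* G)

theorem one_left (g : G) : abelianCirc φ 1 g = g := by
  simp [abelianCirc]

theorem one_right (g : G) : abelianCirc φ g 1 = g := by
  simp [abelianCirc]

theorem inv_right (g : G) : abelianCirc φ g (φ g * g⁻¹ * φ g⁻¹) = 1 := by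
  simp [abelianCirc, mul_assoc]

variable {φ} (hφ : ∀ a b : G, Commute (φ a) (φ b))
include hφ

theorem map_eq_mul (g h : G) : φ (abelianCirc φ g h) = φ g * φ h := by
  simp only [abelianCirc, map_mul, map_inv, mul_assoc, (hφ h (φ g)).eq, inv_mul_cancel_left]

theorem assoc (a b c : G) :
    abelianCirc φ (abelianCirc φ a b) c = abelianCirc φ a (abelianCirc φ b c) := by
  rw [abelianCirc, map_inv, map_eq_mul hφ]
  simp only [abelianCirc, map_inv, mul_inv_rev, mul_assoc]
  rw [(hφ a b).inv_right.left_comm, mul_inv_cancel_left, (hφ a b).eq]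

theorem inv_left (g : G) : abelianCirc φ (φ g * g⁻¹ * φ g⁻¹) g = 1 := by
  have hφ_inv : φ (φ g * g⁻¹ * φ g⁻¹) = (φ g)⁻¹ := by
    rw [map_mul, map_mul, map_inv, map_inv, (hφ (φ g) g).inv_right.eq, mul_inv_cancel_right]
  rw [abelianCirc, map_inv φ (φ g * g⁻¹ * φ g⁻¹), hφ_inv, inv_inv, map_inv]
  group

end abelianCirc

section aPsi

variable {G : Type*} [Group G] (ψ : G →* G)

theorem aPsi_zero (g : G) : aPsi ψ 0 g = 1 := by
  simp [aPsi]

theorem aPsi_succ (n : ℕ) (g : G) :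
    aPsi ψ (n + 1) g = ψ g * (ψ (aPsi ψ n g))⁻¹ * aPsi ψ n g := by
  have hδ : (aDelta ψ)^[n] g = g * (aPsi ψ n g)⁻¹ := by simp [aPsi]
  rw [aPsi, Function.iterate_succ_apply', aDelta, hδ]
  simp only [map_inv, map_mul, mul_inv_rev, inv_inv, mul_assoc, inv_mul_cancel, mul_one]

theorem aPsi_mem_range (n : ℕ) (g : G) : aPsi ψ n g ∈ ψ.range := by
  induction n with
  | zero => simp [aPsi_zero]
  | succ n ih =>
    rw [aPsi_succ]
    exact mul_mem (mul_mem ⟨g, rfl⟩ (inv_mem ⟨_, rfl⟩)) ih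

variable {ψ} (hψ : ∀ a b : G, Commute (ψ a) (ψ b))
include hψ

theorem commute_aPsi (n : ℕ) (x g : G) : Commute (ψ x) (aPsi ψ n g) := by
  obtain ⟨y, hy⟩ := aPsi_mem_range ψ n g
  exact hy ▸ hψ x y

theorem commute_aPsi_aPsi (n : ℕ) (g h : G) : Commute (aPsi ψ n g) (aPsi ψ n h) := by
  obtain ⟨x, hx⟩ := aPsi_mem_range ψ n g
  exact hx ▸ commute_aPsi hψ n x h

theorem aPsi_mul (n : ℕ) (g h : G) : aPsi ψ n (g * h) = aPsi ψ n g * aPsi ψ n h := by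
  induction n with
  | zero => simp [aPsi_zero]
  | succ n ih =>
    set p := aPsi ψ n g
    set q := aPsi ψ n h
    calc aPsi ψ (n + 1) (g * h)
        = ψ g * ψ h * ((ψ p)⁻¹ * (ψ q)⁻¹) * (p * q) := by
          rw [aPsi_succ, ih, map_mul, map_mul, (hψ p q).mul_inv]
      _ = ψ g * (ψ p)⁻¹ * (ψ h * (ψ q)⁻¹) * (p * q) := by
          rw [(hψ h p).inv_right.mul_mul_mul_comm]
      _ = ψ g * (ψ p)⁻¹ * p * (ψ h * (ψ q)⁻¹ * q) := by
          rw [((commute_aPsi hψ n h g).mul_left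
            (commute_aPsi hψ n q g).inv_left).mul_mul_mul_comm]
      _ = aPsi ψ (n + 1) g * aPsi ψ (n + 1) h := by
          rw [aPsi_succ, aPsi_succ]

def aPsiHom (n : ℕ) : G →* G :=
  MonoidHom.mk' (aPsi ψ n) (aPsi_mul hψ n)

end aPsi

/-- For an abelian map ψ and `n ≥ 0`, `(G, ∘_n)` is a group: `∘_n` is associative,
`1` is a two-sided identity, and `ψ_n(g)·g⁻¹·ψ_n(g⁻¹)` is a two-sided inverse of `g`. -/
theorem stmt6 {G : Type*} [Group G] (ψ : G → G)
    (hψ : ∀ a b : G, ψ (a * b) = ψ a * ψ b)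
    (hab : ∀ a b : G, ψ a * ψ b = ψ b * ψ a)
    (n : ℕ) :
    (∀ a b c : G, aCirc ψ n (aCirc ψ n a b) c = aCirc ψ n a (aCirc ψ n b c)) ∧
    (∀ g : G, aCirc ψ n 1 g = g ∧ aCirc ψ n g 1 = g) ∧
    (∀ g : G, aCirc ψ n g (aPsi ψ n g * g⁻¹ * aPsi ψ n g⁻¹) = 1 ∧
      aCirc ψ n (aPsi ψ n g * g⁻¹ * aPsi ψ n g⁻¹) g = 1) := by
  let ψHom : G →* G := MonoidHom.mk' ψ hψ
  have hψ_n := commute_aPsi_aPsi (ψ := ψHom) hab n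
  rw [show aCirc ψ n = abelianCirc (aPsiHom (ψ := ψHom) hab n) from rfl,
    show aPsi ψ n = aPsiHom (ψ := ψHom) hab n from rfl]
  exact ⟨abelianCirc.assoc hψ_n,
    fun g => ⟨abelianCirc.one_left _ g, abelianCirc.one_right _ g⟩,
    fun g => ⟨abelianCirc.inv_right _ g, abelianCirc.inv_left hψ_n g⟩⟩
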